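/- arXiv:0704.2491 — 4 statements merged into one kernel-verified Lean document; each statement's English description precedes it below -/
import Mathlib

section
/- Let σ, τ be finite Borel measures on ℝ and σ^ν, τ^ν sequences of finite Borel measures with uniformly bounded total mass, such that σ^ν(I) → σ(I) and τ^ν(I) → τ(I) for every interval I ⊆ ℝ (including singletons and half-lines). Then the product measures converge on the open half-plane below the diagonal: (σ^ν ⊗ τ^ν)({(x,y) ∈ ℝ² : x < y}) → (σ ⊗ τ)({(x,y) ∈ ℝ² : x < y}), provided that for every ε > 0 there exists a finite partition -∞ = x_0 < x_1 < ... < x_N < x_{N+1} = +∞ with σ((x_{α-1}, x_α)) ≤ ε and τ((x_{α-1}, x_α)) ≤ ε for all α. -/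
/-!
For a partition `x₀ < ⋯ < x_N`, the half-plane `{u < v}` is the disjoint union of the rectangles
`(x_{α-1}, x_α] × (x_α, ∞)` and the near-diagonal set of pairs `u < v` with no partition point
in `[u, v)`. The product measure of the rectangles is a finite sum of products of interval
measures, hence converges. Every `v`-section of the near-diagonal set lies in a single gap of the
partition, so its product measure is at most `ε` times the mass of the second factor. The measure
of the half-plane is therefore within `ε M` of a convergent sum, uniformly in `ν`.
-/

open Filter Set MeasureTheory

open scoped ENNReal NNReal Topology

theorem ENNReal.le_of_forall_pos_le_add_mul {x y C : ℝ≥0∞} (hC : C ≠ ∞)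
    (h : ∀ ε : ℝ≥0, 0 < ε → x ≤ y + ε * C) : x ≤ y := by
  lift C to ℝ≥0 using hC
  rcases eq_or_ne C 0 with rfl | hC0
  · simpa using h 1 one_pos
  refine ENNReal.le_of_forall_pos_le_add fun η hη _ => ?_
  have := h (η / C) (div_pos hη (pos_iff_ne_zero.2 hC0))
  rwa [← ENNReal.coe_mul, div_mul_cancel₀ _ hC0] at this

theorem ENNReal.tendsto_of_forall_approx {ι : Type*} {l : Filter ι} [l.NeBot]
    {f : ι → ℝ≥0∞} {a C : ℝ≥0∞} (hC : C ≠ ∞)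
    (h : ∀ ε : ℝ≥0, 0 < ε → ∃ (g : ι → ℝ≥0∞) (b : ℝ≥0∞), Tendsto g l (𝓝 b) ∧ b ≤ a ∧
      a ≤ b + ε * C ∧ ∀ᶠ i in l, g i ≤ f i ∧ f i ≤ g i + ε * C) :
    Tendsto f l (𝓝 a) := by
  refine tendsto_of_le_liminf_of_limsup_le ?_ ?_
  · refine ENNReal.le_of_forall_pos_le_add_mul hC fun ε hε => ?_
    obtain ⟨g, b, hg, -, hab, hgf⟩ := h ε hε
    calc a ≤ b + ε * C := hab
      _ = liminf g l + ε * C := by rw [hg.liminf_eq]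
      _ ≤ liminf f l + ε * C := by gcongr; exact liminf_le_liminf (hgf.mono fun _ h => h.1)
  · refine ENNReal.le_of_forall_pos_le_add_mul hC fun ε hε => ?_
    obtain ⟨g, b, hg, hba, -, hgf⟩ := h ε hε
    calc limsup f l ≤ limsup (fun i => g i + ε * C) l :=
          limsup_le_limsup (hgf.mono fun _ h => h.2)
      _ = b + ε * C := (hg.add_const _).limsup_eq
      _ ≤ a + ε * C := by gcongr

section Partition

open Function

variable {N : ℕ} (x : Fin (N + 1) → ℝ)

/-- For strictly monotone `x` this is `(x (α - 1), x α]`, with `x (-1) = -∞`. -/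
def cell (α : Fin (N + 1)) : Set ℝ := {u | u ≤ x α ∧ ∀ β < α, x β < u}

def nearDiagonal : Set (ℝ × ℝ) := {p | p.1 < p.2 ∧ ∀ α, x α < p.2 → x α < p.1}

def GapsLE (μ : Measure ℝ) (ε : ℝ≥0∞) : Prop :=
  μ (Iio (x 0)) ≤ ε ∧ μ (Ioi (x (Fin.last N))) ≤ ε ∧
    ∀ i : Fin N, μ (Ioo (x i.castSucc) (x i.succ)) ≤ ε

theorem ordConnected_cell (α : Fin (N + 1)) : (cell x α).OrdConnected :=
  ⟨fun _ ha _ hb _ hu => ⟨hu.2.trans hb.1, fun β hβ => (ha.2 β hβ).trans_le hu.1⟩⟩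

theorem measurableSet_cell (α : Fin (N + 1)) : MeasurableSet (cell x α) := by
  unfold cell; measurability

theorem measurableSet_nearDiagonal : MeasurableSet (nearDiagonal x) := by
  unfold nearDiagonal; measurability

theorem pairwise_disjoint_cell_prod :
    Pairwise (Disjoint on fun α => cell x α ×ˢ Ioi (x α)) := by
  have key : ∀ α β, α < β → Disjoint (cell x α ×ˢ Ioi (x α)) (cell x β ×ˢ Ioi (x β)) :=
    fun α β hαβ => Disjoint.set_prod_left
      (Set.disjoint_left.2 fun _ hα hβ => (hβ.2 α hαβ).not_ge hα.1) _ _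
  intro α β hne
  rcases hne.lt_or_gt with h | h
  · exact key α β h
  · exact (key β α h).symm

theorem disjoint_iUnion_cell_prod_nearDiagonal :
    Disjoint (⋃ α, cell x α ×ˢ Ioi (x α)) (nearDiagonal x) := by
  simp only [Set.disjoint_iUnion_left]
  exact fun α => Set.disjoint_left.2 fun p hp hD => (hD.2 α hp.2).not_ge hp.1.1

theorem setOf_fst_lt_snd_eq (hx : Monotone x) :
    {p : ℝ × ℝ | p.1 < p.2} = (⋃ α, cell x α ×ˢ Ioi (x α)) ∪ nearDiagonal x := by
  ext ⟨u, v⟩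
  simp only [mem_ofPred_eq, mem_union, mem_iUnion, mem_prod, mem_Ioi]
  constructor
  · intro huv
    by_cases hD : (u, v) ∈ nearDiagonal x
    · exact Or.inr hD
    left
    obtain ⟨α, hαv, huα⟩ : ∃ α, x α < v ∧ u ≤ x α := by
      simpa [nearDiagonal, huv] using hD
    obtain ⟨γ, hγ, hmin⟩ := (Finset.univ.filter fun β => u ≤ x β).exists_min_image id
      ⟨α, by simpa using huα⟩
    simp only [Finset.mem_filter, Finset.mem_univ, true_and, id] at hγ hmin
    refine ⟨γ, ⟨hγ, fun β hβ => lt_of_not_ge fun huβ => (hmin β huβ).not_gt hβ⟩, ?_⟩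
    exact (hx (hmin α huα)).trans_lt hαv
  · rintro (⟨α, huα, hαv⟩ | hD)
    · exact huα.1.trans_lt hαv
    · exact hD.1

theorem measure_prod_setOf_fst_lt_snd (hx : Monotone x) (μ ρ : Measure ℝ) [SFinite ρ] :
    μ.prod ρ {p : ℝ × ℝ | p.1 < p.2} =
      ∑ α, μ (cell x α) * ρ (Ioi (x α)) + μ.prod ρ (nearDiagonal x) := by
  rw [setOf_fst_lt_snd_eq x hx, measure_union (disjoint_iUnion_cell_prod_nearDiagonal x)
    (measurableSet_nearDiagonal x), measure_iUnion (pairwise_disjoint_cell_prod x)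
    fun α => (measurableSet_cell x α).prod measurableSet_Ioi, tsum_fintype]
  simp only [Measure.prod_prod]

variable {x}

/-- The `v`-section of `nearDiagonal x` lies in the gap just right of the last `x α < v`. -/
theorem GapsLE.measure_le {μ : Measure ℝ} {ε : ℝ≥0∞} (h : GapsLE x μ ε) (v : ℝ) :
    μ {u | u < v ∧ ∀ α, x α < v → x α < u} ≤ ε := by
  obtain ⟨h0, hlast, hmid⟩ := h
  by_cases hv : ∃ α, x α < v
  · obtain ⟨α₀, hα₀⟩ := hv
    obtain ⟨α, hα, hmax⟩ := (Finset.univ.filter fun β => x β < v).exists_max_image id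
      ⟨α₀, by simpa using hα₀⟩
    simp only [Finset.mem_filter, Finset.mem_univ, true_and, id] at hα hmax
    rcases α.eq_castSucc_or_eq_last with ⟨i, rfl⟩ | rfl
    · have hvi : v ≤ x i.succ := le_of_not_gt fun h => (hmax _ h).not_gt i.castSucc_lt_succ
      refine (measure_mono fun u hu => ?_).trans (hmid i)
      exact ⟨hu.2 _ hα, hu.1.trans_le hvi⟩
    · exact (measure_mono fun u hu => hu.2 _ hα).trans hlast
  · simp only [not_exists, not_lt] at hv
    exact (measure_mono fun u hu => hu.1.trans_le (hv 0)).trans h0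

theorem GapsLE.measure_prod_nearDiagonal_le {μ ρ : Measure ℝ} [SFinite μ] [SFinite ρ]
    {ε : ℝ≥0∞} (h : GapsLE x μ ε) : μ.prod ρ (nearDiagonal x) ≤ ε * ρ univ := by
  rw [Measure.prod_apply_symm (measurableSet_nearDiagonal x), ← lintegral_const]
  exact lintegral_mono fun v => h.measure_le v

theorem GapsLE.eventually_gapsLE {ι : Type*} {l : Filter ι} {μ : Measure ℝ}
    {μs : ι → Measure ℝ} {ε ε' : ℝ≥0∞} (h : GapsLE x μ ε) (hε : ε < ε')
    (hμ : ∀ I : Set ℝ, I.OrdConnected → MeasurableSet I →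
      Tendsto (fun i => μs i I) l (𝓝 (μ I))) :
    ∀ᶠ i in l, GapsLE x (μs i) ε' := by
  have key : ∀ I : Set ℝ, I.OrdConnected → MeasurableSet I → μ I ≤ ε → ∀ᶠ i in l, μs i I ≤ ε' :=
    fun I hI hm hle => ((hμ I hI hm).eventually_lt_const (hle.trans_lt hε)).mono fun _ => le_of_lt
  obtain ⟨h0, hlast, hmid⟩ := h
  filter_upwards [key _ ordConnected_Iio measurableSet_Iio h0,
    key _ ordConnected_Ioi measurableSet_Ioi hlast,
    eventually_all.2 fun i => key _ ordConnected_Ioo measurableSet_Ioo (hmid i)]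
    with i h0 hlast hmid
  exact ⟨h0, hlast, hmid⟩

variable (x)

theorem tendsto_sum_measure_cell_mul {ι : Type*} {l : Filter ι} {σ τ : Measure ℝ}
    [IsFiniteMeasure σ] [IsFiniteMeasure τ] {σs τs : ι → Measure ℝ}
    (hσ : ∀ I : Set ℝ, I.OrdConnected → MeasurableSet I →
      Tendsto (fun i => σs i I) l (𝓝 (σ I)))
    (hτ : ∀ I : Set ℝ, I.OrdConnected → MeasurableSet I →
      Tendsto (fun i => τs i I) l (𝓝 (τ I))) :
    Tendsto (fun i => ∑ α, σs i (cell x α) * τs i (Ioi (x α))) l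
      (𝓝 (∑ α, σ (cell x α) * τ (Ioi (x α)))) :=
  tendsto_finsetSum _ fun α _ => ENNReal.Tendsto.mul
    (hσ _ (ordConnected_cell x α) (measurableSet_cell x α)) (Or.inr (measure_ne_top _ _))
    (hτ _ ordConnected_Ioi measurableSet_Ioi) (Or.inr (measure_ne_top _ _))

end Partition

theorem stmt_6 (σ τ : Measure ℝ) [IsFiniteMeasure σ] [IsFiniteMeasure τ]
    (σν τν : ℕ → Measure ℝ)
    (M : NNReal)
    (hbound : ∀ ν, σν ν Set.univ ≤ M ∧ τν ν Set.univ ≤ M)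
    (hσ : ∀ I : Set ℝ, I.OrdConnected → MeasurableSet I →
      Tendsto (fun ν => σν ν I) atTop (nhds (σ I)))
    (hτ : ∀ I : Set ℝ, I.OrdConnected → MeasurableSet I →
      Tendsto (fun ν => τν ν I) atTop (nhds (τ I)))
    (hpart : ∀ ε : ENNReal, 0 < ε → ∃ (N : ℕ) (x : Fin (N + 1) → ℝ), StrictMono x ∧
      σ (Set.Iio (x 0)) ≤ ε ∧ τ (Set.Iio (x 0)) ≤ ε ∧
      σ (Set.Ioi (x (Fin.last N))) ≤ ε ∧ τ (Set.Ioi (x (Fin.last N))) ≤ ε ∧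
      ∀ i : Fin N, σ (Set.Ioo (x i.castSucc) (x i.succ)) ≤ ε ∧
        τ (Set.Ioo (x i.castSucc) (x i.succ)) ≤ ε) :
    Tendsto (fun ν => (σν ν).prod (τν ν) {p : ℝ × ℝ | p.1 < p.2}) atTop
      (nhds (σ.prod τ {p : ℝ × ℝ | p.1 < p.2})) := by
  have : ∀ n, IsFiniteMeasure (σν n) := fun n => ⟨(hbound n).1.trans_lt ENNReal.coe_lt_top⟩
  have : ∀ n, IsFiniteMeasure (τν n) := fun n => ⟨(hbound n).2.trans_lt ENNReal.coe_lt_top⟩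
  have hτM : τ univ ≤ M :=
    le_of_tendsto' (hτ univ ordConnected_univ MeasurableSet.univ) fun n => (hbound n).2
  refine ENNReal.tendsto_of_forall_approx (C := M) ENNReal.coe_ne_top fun ε hε => ?_
  obtain ⟨N, x, hx, hσ0, -, hσlast, -, hmid⟩ := hpart (ε / 2 : ℝ≥0) (by positivity)
  have hgaps : GapsLE x σ (ε / 2 : ℝ≥0) := ⟨hσ0, hσlast, fun i => (hmid i).1⟩
  simp only [measure_prod_setOf_fst_lt_snd x hx.monotone]
  refine ⟨_, _, tendsto_sum_measure_cell_mul x hσ hτ, le_self_add, ?_, ?_⟩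
  · gcongr
    calc σ.prod τ (nearDiagonal x) ≤ (ε / 2 : ℝ≥0) * τ univ := hgaps.measure_prod_nearDiagonal_le
      _ ≤ ε * M := by gcongr; exact_mod_cast half_le_self ε.2
  · filter_upwards [hgaps.eventually_gapsLE (ENNReal.coe_lt_coe.2 (half_lt_self hε)) hσ]
      with n hn
    refine ⟨le_self_add, ?_⟩
    gcongr
    exact hn.measure_prod_nearDiagonal_le.trans (by gcongr; exact (hbound n).2)
end

section
/- Let E : Ω × Ω → ℝⁿ be a C¹ map on an open set Ω ⊆ ℝⁿ satisfying E(u,u) = 0 for all u, with i-th component E_i, and let l_i : Ω → ℝⁿ be a Lipschitz map such that the first-order Taylor expansion |E_i(u, ũ) − l_i(u)·(ũ − u)| ≤ C|u − ũ|² holds for all u, ũ in a compact convex K ⊆ Ω. Let u : ℝ → K be right continuous of bounded variation with distributional derivative μ = μ_c + μ_a (continuous plus atomic part), and define the signed measure μ_i(B) = ∫_B l_i(u) dμ_c + Σ_{x ∈ B} E_i(u(x−), u(x+)). Then there exists C' > 0 (depending only on C and the Lipschitz constants) such that for all a < b: |E_i(u(a+), u(b−)) − μ_i((a,b))| ≤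 C' · diam(u((a,b))) · |μ|((a,b)). -/
/-!
Write `v = u(a+)`, `w = u(b-)`. Letting `t ↑ b` in the identity `u(t) - u(a) = μ((a, t])` gives
`w - v = μ((a, b))`, which splits `E_i(v, w) - μ_i((a, b))` into three errors:
`E_i(v, w) - l_i(v) · (w - v)`, which is quadratic by the Taylor bound;
`∫ (l_i(v) - l_i(u)) dμ_c`, controlled by the Lipschitz bound on `l_i`; and, at every jump `x`,
`l_i(v) · (u(x+) - u(x-)) - E_i(u(x-), u(x+))`, which is the Taylor error at `u(x-)` plus a
Lipschitz error. All states involved lie in the closure of `u((a, b))`, so their mutual distances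
are at most `diam u((a, b))`, while `|w - v| ≤ |μ|((a, b))`.
-/

open Filter Set MeasureTheory

/-- Integral of a real function against a signed measure, via the Jordan decomposition. -/
noncomputable def sIntegral (s : MeasureTheory.SignedMeasure ℝ) (f : ℝ → ℝ) (B : Set ℝ) : ℝ :=
  (∫ x in B, f x ∂s.toJordanDecomposition.posPart) -
    ∫ x in B, f x ∂s.toJordanDecomposition.negPart

/-- The `i`-th wave measure of a BV function `u`: the continuous part of its derivative
integrated against the left eigenvector `l`, plus the atomic contributions of the wave
strengths `E` of the Riemann problems at the jump points `J j`. -/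
noncomputable def waveMeasure {n : ℕ} (E : (Fin n → ℝ) → (Fin n → ℝ) → ℝ)
    (l : (Fin n → ℝ) → Fin n → ℝ) (u uL : ℝ → Fin n → ℝ)
    (μc : Fin n → MeasureTheory.SignedMeasure ℝ) (J : ℕ → ℝ) (B : Set ℝ) : ℝ :=
  (∑ k : Fin n, sIntegral (μc k) (fun x => l (u x) k) B) +
    ∑' j : ℕ, B.indicator (fun x => E (uL x) (u x)) (J j)

/-- The total variation measure `|μ|` of the derivative of `u`: total variation of the
continuous part plus the Dirac masses carried by the jumps. -/
noncomputable def totalVarMeasure {n : ℕ} (u uL : ℝ → Fin n → ℝ)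
    (μc : Fin n → MeasureTheory.SignedMeasure ℝ) (J : ℕ → ℝ) : Measure ℝ :=
  (∑ k : Fin n, (μc k).totalVariation) +
    Measure.sum (fun j : ℕ => (‖u (J j) - uL (J j)‖₊ : ENNReal) • Measure.dirac (J j))

open scoped Topology ENNReal NNReal

theorem measurable_of_tendsto_nhdsGT {β : Type*} [TopologicalSpace β] [MeasurableSpace β]
    [BorelSpace β] {f : ℝ → β} (hf : ∀ x, Tendsto f (𝓝[>] x) (𝓝 (f x))) : Measurable f :=
  measurable_of_isOpen fun _U hU =>
    MeasurableSet.of_mem_nhdsGT fun x hx => hf x (hU.mem_nhds hx)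

theorem mem_closure_image_Ioo_of_tendsto_nhdsGT {β : Type*} [TopologicalSpace β] {f : ℝ → β}
    {a b : ℝ} {y : β} (hab : a < b) (hf : Tendsto f (𝓝[>] a) (𝓝 y)) :
    y ∈ closure (f '' Ioo a b) :=
  mem_closure_of_tendsto hf <|
    mem_of_superset (Ioo_mem_nhdsGT hab) fun _x hx => mem_image_of_mem f hx

theorem mem_closure_image_Ioo_of_tendsto_nhdsLT {β : Type*} [TopologicalSpace β] {f : ℝ → β}
    {a b x : ℝ} {y : β} (hx : x ∈ Ioc a b) (hf : Tendsto f (𝓝[<] x) (𝓝 y)) :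
    y ∈ closure (f '' Ioo a b) :=
  mem_closure_of_tendsto hf <| mem_of_superset (Ioo_mem_nhdsLT hx.1)
    fun _z hz => mem_image_of_mem f ⟨hz.1, hz.2.trans_le hx.2⟩

theorem norm_sub_le_diam_of_mem_closure {E : Type*} [SeminormedAddCommGroup E] {s : Set E}
    (hs : Bornology.IsBounded s) {p q : E} (hp : p ∈ closure s) (hq : q ∈ closure s) :
    ‖p - q‖ ≤ Metric.diam s := by
  simpa only [Metric.diam_closure, dist_eq_norm] using
    Metric.dist_le_diam_of_mem hs.closure hp hq

theorem eventually_mem_Ioc_iff_mem_Ioo (a b x : ℝ) :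
    ∀ᶠ t in 𝓝[<] b, x ∈ Ioc a t ↔ x ∈ Ioo a b := by
  by_cases hxb : x < b
  · filter_upwards [Ioo_mem_nhdsLT hxb] with t ht
    simp only [mem_Ioc, mem_Ioo, ht.1.le, hxb]
  · filter_upwards [self_mem_nhdsWithin] with t (ht : t < b)
    exact iff_of_false (fun h => hxb (h.2.trans_lt ht)) fun h => hxb h.2

theorem tendsto_tsum_indicator_Ioc_nhdsLT {G : Type*} [NormedAddCommGroup G] [CompleteSpace G]
    {f : ℝ → G} {J : ℕ → ℝ} {a b : ℝ} (hf : Summable fun j => ‖(Ioo a b).indicator f (J j)‖) :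
    Tendsto (fun t => ∑' j, (Ioc a t).indicator f (J j)) (𝓝[<] b)
      (𝓝 (∑' j, (Ioo a b).indicator f (J j))) := by
  refine tendsto_tsum_of_dominated_convergence hf (fun j => ?_) ?_
  · refine tendsto_const_nhds.congr' ?_
    filter_upwards [eventually_mem_Ioc_iff_mem_Ioo a b (J j)] with t ht
    by_cases h : J j ∈ Ioo a b <;> simp [h, ht]
  · filter_upwards [self_mem_nhdsWithin] with t (ht : t < b) j
    exact norm_indicator_le_of_subset (Ioc_subset_Ioo_right ht) f (J j)

theorem norm_indicator_apply_le_indicator_norm {α ι : Type*} [Fintype ι] {F : α → ι → ℝ}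
    (s : Set α) (k : ι) (y : α) :
    ‖s.indicator (fun x => F x k) y‖ ≤ s.indicator (fun x => ‖F x‖) y := by
  by_cases hy : y ∈ s
  · simpa [hy] using norm_le_pi_norm (F y) k
  · simp [hy]

theorem abs_sum_mul_le_card_mul_norm_mul_norm {ι : Type*} [Fintype ι] (c v : ι → ℝ) :
    |∑ k, c k * v k| ≤ Fintype.card ι * ‖c‖ * ‖v‖ := by
  calc |∑ k, c k * v k| ≤ ∑ k, |c k| * |v k| := by
        simpa only [abs_mul] using Finset.abs_sum_le_sum_abs (fun k => c k * v k) Finset.univ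
    _ ≤ ∑ _k : ι, ‖c‖ * ‖v‖ := by
        gcongr with k
        · exact norm_le_pi_norm c k
        · exact norm_le_pi_norm v k
    _ = Fintype.card ι * ‖c‖ * ‖v‖ := by simp [mul_assoc]

namespace MeasureTheory

theorem SignedMeasure.tendsto_apply_of_eventually_mem_iff {α ι : Type*} [MeasurableSpace α]
    (s : SignedMeasure α) {L : Filter ι} [L.IsCountablyGenerated] {A : Set α} {As : ι → Set α}
    (hA : MeasurableSet A) (hAs : ∀ i, MeasurableSet (As i))
    (h_lim : ∀ x, ∀ᶠ i in L, x ∈ As i ↔ x ∈ A) :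
    Tendsto (fun i => s (As i)) L (𝓝 (s A)) := by
  have key : ∀ (μ : Measure α) [IsFiniteMeasure μ],
      Tendsto (fun i => μ.real (As i)) L (𝓝 (μ.real A)) := fun μ _ =>
    (ENNReal.tendsto_toReal (measure_ne_top μ A)).comp
      (tendsto_measure_of_tendsto_indicator_of_isFiniteMeasure L μ hAs h_lim)
  simp only [s.apply_eq_posPart_real_sub_negPart_real hA,
    s.apply_eq_posPart_real_sub_negPart_real (hAs _)]
  exact (key _).sub (key _)

theorem abs_mul_measureReal_sub_setIntegral_le {α : Type*} [MeasurableSpace α] (μ : Measure α)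
    [IsFiniteMeasure μ] {f : α → ℝ} (hf : Measurable f) {B : Set α} (hB : MeasurableSet B)
    {c ε : ℝ} (hfc : ∀ x ∈ B, |c - f x| ≤ ε) :
    |c * μ.real B - ∫ x in B, f x ∂μ| ≤ ε * μ.real B := by
  have hint : IntegrableOn f B μ := by
    refine .of_bound (measure_lt_top μ B) hf.aestronglyMeasurable (|c| + ε) ?_
    refine ae_restrict_of_forall_mem hB fun x hx => ?_
    have := hfc x hx
    rw [Real.norm_eq_abs]
    linarith [abs_sub_abs_le_abs_sub (f x) c, abs_sub_comm c (f x)]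
  rw [← Real.norm_eq_abs, mul_comm c, ← smul_eq_mul, ← setIntegral_const,
    ← integral_sub (integrable_const c) hint]
  exact norm_setIntegral_le_of_norm_le_const (measure_lt_top μ B) fun x hx => hfc x hx

theorem Measure.hasSum_indicator_of_sum_smul_dirac_ne_top {α : Type*} [MeasurableSpace α]
    (w : α → ℝ≥0) (J : ℕ → α) {B : Set α} (hB : MeasurableSet B)
    (h : Measure.sum (fun j => (w (J j) : ℝ≥0∞) • Measure.dirac (J j)) B ≠ ∞) :
    HasSum (fun j => B.indicator (fun x => (w x : ℝ)) (J j))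
      ((Measure.sum fun j => (w (J j) : ℝ≥0∞) • Measure.dirac (J j)).real B) := by
  have hterm : ∀ j, ((w (J j) : ℝ≥0∞) • Measure.dirac (J j)) B =
      ((B.indicator w (J j) : ℝ≥0) : ℝ≥0∞) := fun j => by
    by_cases hj : J j ∈ B <;> simp [Measure.dirac_apply' _ hB, hj]
  rw [Measure.sum_apply _ hB] at h
  simp only [hterm] at h
  have hsum := ENNReal.tsum_coe_ne_top_iff_summable.1 h
  rw [measureReal_def, Measure.sum_apply _ hB]
  simp only [hterm, ← ENNReal.coe_tsum hsum, ENNReal.coe_toReal]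
  convert NNReal.hasSum_coe.2 hsum.hasSum using 2 with j
  by_cases hj : J j ∈ B <;> simp [hj]

end MeasureTheory

theorem abs_mul_apply_sub_sIntegral_le (s : SignedMeasure ℝ) {f : ℝ → ℝ} (hf : Measurable f)
    {B : Set ℝ} (hB : MeasurableSet B) {c ε : ℝ} (hfc : ∀ x ∈ B, |c - f x| ≤ ε) :
    |c * s B - sIntegral s f B| ≤ ε * s.totalVariation.real B := by
  have hP := abs_mul_measureReal_sub_setIntegral_le s.toJordanDecomposition.posPart hf hB hfc
  have hN := abs_mul_measureReal_sub_setIntegral_le s.toJordanDecomposition.negPart hf hB hfc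
  rw [s.apply_eq_posPart_real_sub_negPart_real hB, SignedMeasure.totalVariation,
    measureReal_add_apply, sIntegral, mul_add]
  refine (le_of_eq (congrArg abs ?_)).trans ((abs_sub _ _).trans (add_le_add hP hN))
  ring

theorem abs_sum_mul_tsum_indicator_sub_tsum_le {α ι : Type*} [Fintype ι] {F : α → ι → ℝ}
    {e : α → ℝ} {c : ι → ℝ} {S : Set α} {J : ℕ → α} {m ε : ℝ}
    (hm : HasSum (fun j => S.indicator (fun x => ‖F x‖) (J j)) m)
    (he : ∀ x ∈ S, |∑ k, c k * F x k - e x| ≤ ε * ‖F x‖) :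
    |∑ k, c k * ∑' j, S.indicator (fun x => F x k) (J j) - ∑' j, S.indicator e (J j)| ≤
      ε * m := by
  set d : ℕ → ℝ := fun j => S.indicator (fun x => ∑ k, c k * F x k - e x) (J j)
  have hd : ∀ j, ‖d j‖ ≤ ε * S.indicator (fun x => ‖F x‖) (J j) := fun j => by
    by_cases hj : J j ∈ S <;> simp [d, hj, he]
  have hFk : ∀ k, Summable fun j => c k * S.indicator (fun x => F x k) (J j) := fun k =>
    (hm.summable.of_norm_bounded fun j =>
      norm_indicator_apply_le_indicator_norm S k (J j)).mul_left _
  have he_split : ∀ j,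
      S.indicator e (J j) = ∑ k, c k * S.indicator (fun x => F x k) (J j) - d j := fun j => by
    by_cases hj : J j ∈ S <;> simp [d, hj]
  rw [tsum_congr he_split, (summable_sum fun k _ => hFk k).tsum_sub
    (hm.summable.mul_left ε |>.of_norm_bounded hd), Summable.tsum_finsetSum fun k _ => hFk k]
  simp only [tsum_mul_left, sub_sub_cancel, ← Real.norm_eq_abs]
  exact tsum_of_norm_bounded (hm.mul_left ε) hd

theorem abs_sum_mul_apply_sub_sum_sIntegral_le {ι : Type*} [Fintype ι]
    (μc : ι → SignedMeasure ℝ) {f : ℝ → ι → ℝ} (hf : Measurable f) {c : ι → ℝ} {B : Set ℝ}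
    (hB : MeasurableSet B) {ε : ℝ} (hfc : ∀ x ∈ B, ‖c - f x‖ ≤ ε) :
    |∑ k, c k * μc k B - ∑ k, sIntegral (μc k) (fun x => f x k) B| ≤
      ε * ∑ k, (μc k).totalVariation.real B := by
  rw [← Finset.sum_sub_distrib, Finset.mul_sum]
  refine (Finset.abs_sum_le_sum_abs _ _).trans (Finset.sum_le_sum fun k _ => ?_)
  exact abs_mul_apply_sub_sIntegral_le (μc k) ((measurable_pi_apply k).comp hf) hB
    fun x hx => (norm_le_pi_norm (c - f x) k).trans (hfc x hx)

section BoundedVariation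

variable {n : ℕ} {u uL : ℝ → Fin n → ℝ} {μc : Fin n → SignedMeasure ℝ} {J : ℕ → ℝ}

theorem hasSum_indicator_norm_jump (hBV : totalVarMeasure u uL μc J univ ≠ ⊤) {B : Set ℝ}
    (hB : MeasurableSet B) :
    HasSum (fun j => B.indicator (fun x => ‖u x - uL x‖) (J j))
      ((totalVarMeasure u uL μc J B).toReal - ∑ k, (μc k).totalVariation.real B) := by
  set νJ := Measure.sum fun j : ℕ => (‖u (J j) - uL (J j)‖₊ : ℝ≥0∞) • Measure.dirac (J j)
  have htv : totalVarMeasure u uL μc J B = (∑ k, (μc k).totalVariation) B + νJ B :=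
    Measure.add_apply _ _ _
  have hν : νJ B ≠ ∞ :=
    ne_top_of_le_ne_top hBV ((htv ▸ le_add_self).trans (measure_mono (subset_univ B)))
  rw [htv, ENNReal.toReal_add (measure_ne_top _ _) hν, Measure.finsetSum_apply,
    ENNReal.toReal_sum fun k _ => measure_ne_top _ _]
  simpa only [measureReal_def, add_sub_cancel_left, coe_nnnorm] using
    Measure.hasSum_indicator_of_sum_smul_dirac_ne_top (fun x => ‖u x - uL x‖₊) J hB hν

theorem leftLimit_sub_apply_eq {a b : ℝ} (hab : a < b)
    (hlc : Tendsto u (𝓝[<] b) (𝓝 (uL b)))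
    (hjump : Summable fun j => (Ioo a b).indicator (fun x => ‖u x - uL x‖) (J j)) (k : Fin n)
    (hderiv : ∀ t, a ≤ t → u t k - u a k = μc k (Ioc a t) +
      ∑' j, (Ioc a t).indicator (fun x => u x k - uL x k) (J j)) :
    uL b k - u a k = μc k (Ioo a b) +
      ∑' j, (Ioo a b).indicator (fun x => u x k - uL x k) (J j) := by
  refine tendsto_nhds_unique (((continuous_apply k).tendsto _).comp hlc |>.sub_const (u a k)) ?_
  refine (((μc k).tendsto_apply_of_eventually_mem_iff measurableSet_Ioo
    (fun _ => measurableSet_Ioc) (eventually_mem_Ioc_iff_mem_Ioo a b)).add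
    (tendsto_tsum_indicator_Ioc_nhdsLT ?_)).congr' ?_
  · exact hjump.of_nonneg_of_le (fun _ => norm_nonneg _)
      fun j => norm_indicator_apply_le_indicator_norm (F := fun x => u x - uL x) _ k (J j)
  · filter_upwards [Ioo_mem_nhdsLT hab] with t ht
    exact (hderiv t ht.1.le).symm

theorem norm_leftLimit_sub_le_totalVarMeasure {a b : ℝ} (hab : a < b)
    (hlc : Tendsto u (𝓝[<] b) (𝓝 (uL b))) (hBV : totalVarMeasure u uL μc J univ ≠ ⊤)
    (hderiv : ∀ t, a ≤ t → ∀ k, u t k - u a k = μc k (Ioc a t) +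
      ∑' j, (Ioc a t).indicator (fun x => u x k - uL x k) (J j)) :
    ‖uL b - u a‖ ≤ (totalVarMeasure u uL μc J (Ioo a b)).toReal := by
  have hjump := hasSum_indicator_norm_jump hBV (measurableSet_Ioo (a := a) (b := b))
  refine (pi_norm_le_iff_of_nonneg ENNReal.toReal_nonneg).2 fun k => ?_
  rw [Pi.sub_apply, leftLimit_sub_apply_eq hab hlc hjump.summable k (hderiv · · k)]
  have hk := Finset.single_le_sum (f := fun k => (μc k).totalVariation.real (Ioo a b))
    (fun k _ => measureReal_nonneg) (Finset.mem_univ k)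
  calc _ ≤ ‖μc k (Ioo a b)‖ + ‖∑' j, (Ioo a b).indicator (fun x => u x k - uL x k) (J j)‖ :=
        norm_add_le _ _
    _ ≤ (μc k).totalVariation.real (Ioo a b) + ((totalVarMeasure u uL μc J (Ioo a b)).toReal -
        ∑ k, (μc k).totalVariation.real (Ioo a b)) :=
        add_le_add ((μc k).norm_le_totalVariation _) (tsum_of_norm_bounded hjump fun j =>
          norm_indicator_apply_le_indicator_norm (F := fun x => u x - uL x) _ k (J j))
    _ ≤ _ := by linarith

end BoundedVariation

theorem abs_sum_mul_sub_sub_le_of_taylor {n : ℕ} {K : Set (Fin n → ℝ)}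
    {E : (Fin n → ℝ) → (Fin n → ℝ) → ℝ} {l : (Fin n → ℝ) → Fin n → ℝ} {C : ℝ} {L : ℝ≥0}
    (hTaylor : ∀ v ∈ K, ∀ w ∈ K, |E v w - ∑ k, l v k * (w k - v k)| ≤ C * ‖w - v‖ ^ 2)
    (hl : LipschitzOnWith L l K) {v v' w : Fin n → ℝ} (hv : v ∈ K) (hv' : v' ∈ K) (hw : w ∈ K) :
    |∑ k, l v k * (w k - v' k) - E v' w| ≤
      (n * L * ‖v - v'‖ + C * ‖w - v'‖) * ‖w - v'‖ := by
  have hlip : ‖l v - l v'‖ ≤ L * ‖v - v'‖ := lipschitzOnWith_iff_norm_sub_le.1 hl hv hv'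
  have hsplit : ∑ k, l v k * (w k - v' k) - E v' w =
      ∑ k, (l v - l v') k * (w - v') k - (E v' w - ∑ k, l v' k * (w k - v' k)) := by
    simp only [Pi.sub_apply, sub_mul, Finset.sum_sub_distrib]
    ring
  rw [hsplit]
  calc _ ≤ |∑ k, (l v - l v') k * (w - v') k| + |E v' w - ∑ k, l v' k * (w k - v' k)| :=
        abs_sub _ _
    _ ≤ n * ‖l v - l v'‖ * ‖w - v'‖ + C * ‖w - v'‖ ^ 2 := by
        gcongr
        · simpa using abs_sum_mul_le_card_mul_norm_mul_norm (l v - l v') (w - v')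
        · exact hTaylor v' hv' w hw
    _ ≤ (n * L * ‖v - v'‖ + C * ‖w - v'‖) * ‖w - v'‖ := by
        nlinarith [norm_nonneg (w - v'), mul_le_mul_of_nonneg_left hlip (Nat.cast_nonneg n)]

theorem sub_waveMeasure_eq {n : ℕ} {E : (Fin n → ℝ) → (Fin n → ℝ) → ℝ}
    {l : (Fin n → ℝ) → Fin n → ℝ} {u uL : ℝ → Fin n → ℝ} {μc : Fin n → SignedMeasure ℝ}
    {J : ℕ → ℝ} {B : Set ℝ} {v w : Fin n → ℝ}
    (hvw : ∀ k, w k - v k = μc k B + ∑' j, B.indicator (fun x => u x k - uL x k) (J j)) :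
    E v w - waveMeasure E l u uL μc J B =
      (E v w - ∑ k, l v k * (w k - v k)) +
      (∑ k, l v k * μc k B - ∑ k, sIntegral (μc k) (fun x => l (u x) k) B) +
      (∑ k, l v k * ∑' j, B.indicator (fun x => u x k - uL x k) (J j) -
        ∑' j, B.indicator (fun x => E (uL x) (u x)) (J j)) := by
  simp only [waveMeasure, hvw, mul_add, Finset.sum_add_distrib]
  ring

theorem abs_sub_waveMeasure_le {n : ℕ} {K : Set (Fin n → ℝ)}
    {E : (Fin n → ℝ) → (Fin n → ℝ) → ℝ} {l : (Fin n → ℝ) → Fin n → ℝ} {C : ℝ} {L : ℝ≥0}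
    (hTaylor : ∀ v ∈ K, ∀ w ∈ K, |E v w - ∑ k, l v k * (w k - v k)| ≤ C * ‖w - v‖ ^ 2)
    (hl : LipschitzOnWith L l K) (hC : 0 ≤ C) {u uL : ℝ → Fin n → ℝ}
    {μc : Fin n → SignedMeasure ℝ} {J : ℕ → ℝ} {a b D : ℝ} (hab : a < b) {Z : Set (Fin n → ℝ)}
    (hZK : Z ⊆ K) (hZ : ∀ p ∈ Z, ∀ q ∈ Z, ‖p - q‖ ≤ D) (hua : u a ∈ Z)
    (huL : ∀ x ∈ Ioc a b, uL x ∈ Z) (hux : ∀ x ∈ Ioo a b, u x ∈ Z)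
    (hlu : Measurable fun x => l (u x)) (hlc : Tendsto u (𝓝[<] b) (𝓝 (uL b)))
    (hBV : totalVarMeasure u uL μc J univ ≠ ⊤)
    (hderiv : ∀ t, a ≤ t → ∀ k, u t k - u a k = μc k (Ioc a t) +
      ∑' j, (Ioc a t).indicator (fun x => u x k - uL x k) (J j)) :
    |E (u a) (uL b) - waveMeasure E l u uL μc J (Ioo a b)| ≤
      (2 * C + (n + 1) * L) * D * (totalVarMeasure u uL μc J (Ioo a b)).toReal := by
  set M := (totalVarMeasure u uL μc J (Ioo a b)).toReal
  set mC := ∑ k, (μc k).totalVariation.real (Ioo a b)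
  have hjump := hasSum_indicator_norm_jump hBV (measurableSet_Ioo (a := a) (b := b))
  have huLb : uL b ∈ Z := huL b ⟨hab, le_rfl⟩
  have hD : 0 ≤ D := by simpa using hZ _ hua _ hua
  have hmC : 0 ≤ mC := Finset.sum_nonneg fun k _ => measureReal_nonneg
  have hmJ : 0 ≤ M - mC := hjump.nonneg fun j => indicator_nonneg (fun x _ => norm_nonneg _) _
  have h_ends : |E (u a) (uL b) - ∑ k, l (u a) k * (uL b k - u a k)| ≤ C * (D * M) := by
    refine (hTaylor _ (hZK hua) _ (hZK huLb)).trans ?_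
    have hΔM := norm_leftLimit_sub_le_totalVarMeasure hab hlc hBV hderiv
    have hΔD := hZ _ huLb _ hua
    gcongr
    nlinarith [norm_nonneg (uL b - u a)]
  have h_cont := abs_sum_mul_apply_sub_sum_sIntegral_le μc hlu measurableSet_Ioo
    (c := l (u a)) (ε := L * D) fun x hx => by
      refine (lipschitzOnWith_iff_norm_sub_le.1 hl (hZK hua) (hZK (hux x hx))).trans ?_
      gcongr
      exact hZ _ hua _ (hux x hx)
  have h_jump := abs_sum_mul_tsum_indicator_sub_tsum_le (F := fun x => u x - uL x)
    (e := fun x => E (uL x) (u x)) (c := l (u a)) (ε := n * L * D + C * D) hjump fun x hx => by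
      have huLx := huL x ⟨hx.1, hx.2.le⟩
      refine (abs_sum_mul_sub_sub_le_of_taylor hTaylor hl (hZK hua) (hZK huLx)
        (hZK (hux x hx))).trans ?_
      gcongr
      exacts [hZ _ hua _ huLx, hZ _ (hux x hx) _ huLx]
  rw [sub_waveMeasure_eq fun k => leftLimit_sub_apply_eq hab hlc hjump.summable k (hderiv · · k)]
  calc _ ≤ C * (D * M) + L * D * mC + (n * L * D + C * D) * (M - mC) :=
        (abs_add_three _ _ _).trans (add_le_add (add_le_add h_ends h_cont) h_jump)
    _ ≤ (2 * C + (n + 1) * L) * D * M := by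
        nlinarith [mul_nonneg (mul_nonneg L.coe_nonneg hD) hmJ,
          mul_nonneg (mul_nonneg (mul_nonneg n.cast_nonneg L.coe_nonneg) hD) hmC,
          mul_nonneg (mul_nonneg hC hD) hmC]

theorem stmt_8_general {n : ℕ} (K : Set (Fin n → ℝ)) (hKc : IsCompact K)
    (E : (Fin n → ℝ) → (Fin n → ℝ) → ℝ) (l : (Fin n → ℝ) → Fin n → ℝ)
    (C : ℝ) (hC : 0 < C) (L : NNReal)
    (hTaylor : ∀ v ∈ K, ∀ w ∈ K, |E v w - ∑ k, l v k * (w k - v k)| ≤ C * ‖w - v‖ ^ 2)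
    (hl : LipschitzOnWith L l K)
    (u uL : ℝ → Fin n → ℝ) (hu : ∀ x, u x ∈ K)
    (hrc : ∀ x : ℝ, Tendsto u (nhdsWithin x (Set.Ioi x)) (nhds (u x)))
    (hlc : ∀ x : ℝ, Tendsto u (nhdsWithin x (Set.Iio x)) (nhds (uL x)))
    (μc : Fin n → MeasureTheory.SignedMeasure ℝ) (J : ℕ → ℝ)
    (hderiv : ∀ a b : ℝ, a ≤ b → ∀ k : Fin n,
      u b k - u a k = μc k (Set.Ioc a b) +
        ∑' j : ℕ, (Set.Ioc a b).indicator (fun x => u x k - uL x k) (J j))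
    (hBV : totalVarMeasure u uL μc J Set.univ ≠ ⊤) :
    ∃ C' > (0 : ℝ), ∀ a b : ℝ, a < b →
      |E (u a) (uL b) - waveMeasure E l u uL μc J (Set.Ioo a b)| ≤
        C' * Metric.diam (u '' Set.Ioo a b) *
          (totalVarMeasure u uL μc J (Set.Ioo a b)).toReal := by
  refine ⟨2 * C + (n + 1) * L, by positivity, fun a b hab => ?_⟩
  have hK : u '' Ioo a b ⊆ K := image_subset_iff.2 fun x _ => hu x
  have hlu : Measurable fun x => l (u x) :=
    measurable_of_tendsto_nhdsGT fun x => (hl.continuousOn (u x) (hu x)).tendsto.comp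
      (tendsto_nhdsWithin_iff.2 ⟨hrc x, Eventually.of_forall hu⟩)
  exact abs_sub_waveMeasure_le hTaylor hl hC.le hab (closure_minimal hK hKc.isClosed)
    (fun p hp q hq => norm_sub_le_diam_of_mem_closure (hKc.isBounded.subset hK) hp hq)
    (mem_closure_image_Ioo_of_tendsto_nhdsGT hab (hrc a))
    (fun x hx => mem_closure_image_Ioo_of_tendsto_nhdsLT hx (hlc x))
    (fun x hx => subset_closure (mem_image_of_mem u hx)) hlu (hlc b) hBV (hderiv a)

theorem stmt_8 {n : ℕ} (K : Set (Fin n → ℝ)) (hKc : IsCompact K) (hKconv : Convex ℝ K)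
    (E : (Fin n → ℝ) → (Fin n → ℝ) → ℝ) (l : (Fin n → ℝ) → Fin n → ℝ)
    (C : ℝ) (hC : 0 < C) (L : NNReal)
    (hE0 : ∀ v ∈ K, E v v = 0)
    (hTaylor : ∀ v ∈ K, ∀ w ∈ K, |E v w - ∑ k, l v k * (w k - v k)| ≤ C * ‖w - v‖ ^ 2)
    (hl : LipschitzOnWith L l K)
    (u uL : ℝ → Fin n → ℝ) (hu : ∀ x, u x ∈ K)
    (hrc : ∀ x : ℝ, Tendsto u (nhdsWithin x (Set.Ioi x)) (nhds (u x)))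
    (hlc : ∀ x : ℝ, Tendsto u (nhdsWithin x (Set.Iio x)) (nhds (uL x)))
    (μc : Fin n → MeasureTheory.SignedMeasure ℝ) (J : ℕ → ℝ)
    (hJ : ∀ x : ℝ, x ∉ Set.range J → uL x = u x)
    (hcont : ∀ (k : Fin n) (x : ℝ), μc k {x} = 0)
    (hderiv : ∀ a b : ℝ, a ≤ b → ∀ k : Fin n,
      u b k - u a k = μc k (Set.Ioc a b) +
        ∑' j : ℕ, (Set.Ioc a b).indicator (fun x => u x k - uL x k) (J j))
    (hBV : totalVarMeasure u uL μc J Set.univ ≠ ⊤) :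
    ∃ C' > (0 : ℝ), ∀ a b : ℝ, a < b →
      |E (u a) (uL b) - waveMeasure E l u uL μc J (Set.Ioo a b)| ≤
        C' * Metric.diam (u '' Set.Ioo a b) *
          (totalVarMeasure u uL μc J (Set.Ioo a b)).toReal :=
  stmt_8_general K hKc E l C hC L hTaylor hl u uL hu hrc hlc μc J hderiv hBV
end

section
/- Let u : ℝ → ℝⁿ be right continuous with bounded total variation, integrable, and with distributional derivative μ. Then there exists a sequence v_ν of piecewise constant functions (with finitely many jumps, each value of v_ν being a one-sided trace of u at some point) such that v_ν → u both in L¹(ℝ;ℝⁿ) and in L^∞(ℝ;ℝⁿ), and TV(v_ν) ≤ TV(u) for all ν. -/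
/-!
An integrable function of bounded variation tends to `0` at `±∞`, so outside a long interval
`[a, b)` it is uniformly small and has small integral. On `[a, b)` take the greedy partition in
which `t (k + 1)` is the first point after `t k` where `u` leaves the `δ`-ball around `u (t k)`:
right continuity makes every step nontrivial, and every step ending before `b` uses up `δ` of
variation, so `b` is reached after finitely many steps. The step function equal to `u (t k)` on
`[t k, t (k + 1))` and to `0` off `[a, b)` is then the approximant; its variation is at most that
of `u` by lower semicontinuity of the variation under pointwise convergence.
-/

open Filter Set MeasureTheory Topology
open scoped ENNReal

section Variation

variable {α E : Type*} [LinearOrder α] [PseudoEMetricSpace E]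

theorem eVariationOn_Iic_add_edist_le (f : α → E) {x y : α} (hxy : x ≤ y) :
    eVariationOn f (Iic x) + edist (f x) (f y) ≤ eVariationOn f (Iic y) :=
  calc eVariationOn f (Iic x) + edist (f x) (f y)
      ≤ eVariationOn f (Iic x) + eVariationOn f (Icc x y) := by
        gcongr; exact eVariationOn.edist_le f ⟨le_rfl, hxy⟩ ⟨hxy, le_rfl⟩
    _ ≤ eVariationOn f (Iic x ∪ Icc x y) :=
        eVariationOn.add_le_union f fun _ hx _ hy => hx.trans hy.1
    _ = eVariationOn f (Iic y) := by rw [Iic_union_Icc_eq_Iic hxy]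

theorem eVariationOn_eq_top_of_le_edist {f : α → E} {s : Set α} {t : ℕ → α} (ht : Monotone t)
    (hts : ∀ k, t k ∈ s) {δ : ℝ≥0∞} (hδ : δ ≠ 0)
    (hjump : ∀ k, δ ≤ edist (f (t (k + 1))) (f (t k))) : eVariationOn f s = ⊤ := by
  by_contra hne
  obtain ⟨m, hm⟩ := ENNReal.exists_nat_mul_gt hδ hne
  refine hm.not_ge ?_
  calc (m : ℝ≥0∞) * δ = ∑ _k ∈ Finset.range m, δ := by simp
    _ ≤ ∑ k ∈ Finset.range m, edist (f (t (k + 1))) (f (t k)) :=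
        Finset.sum_le_sum fun k _ => hjump k
    _ ≤ eVariationOn f s := eVariationOn.sum_le ht hts

theorem cauchy_map_atBot_of_eVariationOn_ne_top [Nonempty α] {f : α → E}
    (hf : eVariationOn f univ ≠ ⊤) : Cauchy (map f atBot) := by
  set W : α → ℝ≥0∞ := fun x => eVariationOn f (Iic x)
  set I := ⨅ x, W x
  have hW : Monotone W := fun x y h => eVariationOn.mono f (Iic_subset_Iic.2 h)
  have hI : I ≠ ⊤ := ne_top_of_le_ne_top hf
    ((iInf_le W (Classical.arbitrary α)).trans (eVariationOn.mono f (subset_univ _)))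
  refine EMetric.cauchy_iff.2 ⟨map_neBot.ne, fun ε hε => ?_⟩
  obtain ⟨A, hA⟩ := eventually_atBot.1
    ((tendsto_atBot_iInf hW).eventually_lt_const (ENNReal.lt_add_right hI hε.ne'))
  have hclose : ∀ p q, p ≤ q → q ≤ A → edist (f p) (f q) < ε := fun p q hpq hqA =>
    (ENNReal.add_lt_add_iff_left hI).1 <| calc
      I + edist (f p) (f q) ≤ W p + edist (f p) (f q) := by gcongr; exact iInf_le W p
      _ ≤ W q := eVariationOn_Iic_add_edist_le f hpq
      _ < I + ε := hA q hqA
  refine ⟨f '' Iic A, image_mem_map (Iic_mem_atBot A), ?_⟩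
  rintro _ ⟨x, hx, rfl⟩ _ ⟨y, hy, rfl⟩
  rcases le_total x y with hxy | hyx
  · exact hclose x y hxy hy
  · rw [edist_comm]; exact hclose y x hyx hx

end Variation

section Tails

variable {E : Type*} [NormedAddCommGroup E] [CompleteSpace E] {f : ℝ → E}

theorem tendsto_atBot_zero_of_eVariationOn_ne_top (hf : eVariationOn f univ ≠ ⊤)
    (hint : Integrable f) : Tendsto f atBot (𝓝 0) := by
  obtain ⟨L, hL⟩ := CompleteSpace.complete (cauchy_map_atBot_of_eVariationOn_ne_top hf)
  obtain rfl : L = 0 := (hint.integrableAtFilter atBot).eq_zero_of_tendsto (fun s hs => by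
    obtain ⟨b, hb⟩ := mem_atBot_sets.1 hs
    rw [← top_le_iff, ← Real.volume_Iic (a := b)]
    exact measure_mono hb) hL
  exact hL

theorem tendsto_atTop_zero_of_eVariationOn_ne_top (hf : eVariationOn f univ ≠ ⊤)
    (hint : Integrable f) : Tendsto f atTop (𝓝 0) := by
  have hf' : eVariationOn (f ∘ Neg.neg) univ ≠ ⊤ := by
    rwa [eVariationOn.comp_eq_of_antitoneOn f Neg.neg fun _ _ _ _ h => neg_le_neg h,
      image_univ, neg_surjective.range_eq]
  simpa [Function.comp_def] using
    (tendsto_atBot_zero_of_eVariationOn_ne_top hf' hint.comp_neg).comp tendsto_neg_atTop_atBot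

end Tails

section Breakpoints

variable {E : Type*} [PseudoMetricSpace E] (f : ℝ → E) (b ε : ℝ)

noncomputable def nextBreak (c : ℝ) : ℝ :=
  sInf {x | c < x ∧ (b ≤ x ∨ ε ≤ dist (f x) (f c))}

noncomputable def breakpoints (a : ℝ) (k : ℕ) : ℝ :=
  (nextBreak f b ε)^[k] a

variable {f b ε} {a c : ℝ}

theorem isGLB_nextBreak (hc : c < b) :
    IsGLB {x | c < x ∧ (b ≤ x ∨ ε ≤ dist (f x) (f c))} (nextBreak f b ε c) :=
  isGLB_csInf ⟨b, hc, Or.inl le_rfl⟩ ⟨c, fun _ hx => hx.1.le⟩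

theorem nextBreak_le (hc : c < b) : nextBreak f b ε c ≤ b :=
  (isGLB_nextBreak hc).1 ⟨hc, Or.inl le_rfl⟩

theorem nextBreak_self : nextBreak f b ε b = b := by
  have : {x | b < x ∧ (b ≤ x ∨ ε ≤ dist (f x) (f b))} = Ioi b :=
    Set.ext fun _ => ⟨And.left, fun hx => ⟨hx, Or.inl hx.le⟩⟩
  rw [nextBreak, this, csInf_Ioi]

theorem lt_nextBreak (hc : c < b) (hε : 0 < ε) (hrc : Tendsto f (𝓝[>] c) (𝓝 (f c))) :
    c < nextBreak f b ε c := by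
  have hnear : ∀ᶠ x in 𝓝[>] c, x < b ∧ dist (f x) (f c) < ε :=
    (eventually_nhdsWithin_of_eventually_nhds (eventually_lt_nhds hc)).and
      (hrc (Metric.ball_mem_nhds _ hε))
  obtain ⟨d, hcd, hd⟩ := mem_nhdsGT_iff_exists_Ioo_subset.1 hnear
  refine lt_of_lt_of_le (mem_Ioi.1 hcd)
    ((isGLB_nextBreak hc).2 fun x ⟨hcx, hx⟩ => le_of_not_gt fun hxd => ?_)
  obtain ⟨hxb, hxc⟩ := hd ⟨hcx, hxd⟩
  exact hx.elim (fun h => h.not_gt hxb) (fun h => h.not_gt hxc)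

theorem dist_lt_of_mem_Ico_nextBreak (hε : 0 < ε) {y : ℝ}
    (hy : y ∈ Ico c (nextBreak f b ε c)) : dist (f y) (f c) < ε := by
  rcases hy.1.eq_or_lt with rfl | hcy
  · simpa using hε
  · by_contra! h
    exact hy.2.not_ge (csInf_le ⟨c, fun _ hx => hx.1.le⟩ ⟨hcy, Or.inr h⟩)

theorem le_dist_nextBreak (hc : c < b) (hlt : nextBreak f b ε c < b)
    (hrc : Tendsto f (𝓝[>] (nextBreak f b ε c)) (𝓝 (f (nextBreak f b ε c)))) :
    ε ≤ dist (f (nextBreak f b ε c)) (f c) := by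
  have hfreq : ∃ᶠ x in 𝓝[≥] (nextBreak f b ε c), ε ≤ dist (f x) (f c) :=
    ((isGLB_nextBreak hc).frequently_mem ⟨b, hc, Or.inl le_rfl⟩).and_eventually
      (eventually_nhdsWithin_of_eventually_nhds (eventually_lt_nhds hlt)) |>.mono
      fun _ ⟨⟨_, hx⟩, hxb⟩ => hx.resolve_left hxb.not_ge
  exact (isClosed_le continuous_const (continuous_id.dist continuous_const))
    |>.mem_of_frequently_of_tendsto hfreq (continuousWithinAt_Ioi_iff_Ici.1 hrc)

theorem nextBreak_mem_Icc (hε : 0 < ε) (hrc : ∀ x ∈ Ico a b, Tendsto f (𝓝[>] x) (𝓝 (f x)))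
    (hc : c ∈ Icc a b) : nextBreak f b ε c ∈ Icc c b := by
  rcases hc.2.lt_or_eq with hcb | rfl
  · exact ⟨(lt_nextBreak hcb hε (hrc c ⟨hc.1, hcb⟩)).le, nextBreak_le hcb⟩
  · rw [nextBreak_self]; exact left_mem_Icc.2 le_rfl

theorem breakpoints_succ (k : ℕ) :
    breakpoints f b ε a (k + 1) = nextBreak f b ε (breakpoints f b ε a k) :=
  Function.iterate_succ_apply' _ _ _

theorem breakpoints_mem_Icc (hab : a ≤ b) (hε : 0 < ε)
    (hrc : ∀ x ∈ Ico a b, Tendsto f (𝓝[>] x) (𝓝 (f x))) (k : ℕ) :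
    breakpoints f b ε a k ∈ Icc a b := by
  induction k with
  | zero => exact ⟨le_rfl, hab⟩
  | succ k ih =>
    rw [breakpoints_succ]
    exact Icc_subset_Icc_left ih.1 (nextBreak_mem_Icc hε hrc ih)

theorem monotone_breakpoints (hab : a ≤ b) (hε : 0 < ε)
    (hrc : ∀ x ∈ Ico a b, Tendsto f (𝓝[>] x) (𝓝 (f x))) : Monotone (breakpoints f b ε a) :=
  monotone_nat_of_le_succ fun k => by
    rw [breakpoints_succ]
    exact (nextBreak_mem_Icc hε hrc (breakpoints_mem_Icc hab hε hrc k)).1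

theorem exists_breakpoints_eq (hab : a ≤ b) (hε : 0 < ε)
    (hrc : ∀ x ∈ Ico a b, Tendsto f (𝓝[>] x) (𝓝 (f x))) (hf : eVariationOn f (Icc a b) ≠ ⊤) :
    ∃ K, breakpoints f b ε a K = b := by
  by_contra! hne
  have hmem := breakpoints_mem_Icc hab hε hrc
  have hlt k : breakpoints f b ε a k < b := (hmem k).2.lt_of_ne (hne k)
  refine hf (eVariationOn_eq_top_of_le_edist (monotone_breakpoints hab hε hrc) hmem
    (ENNReal.ofReal_pos.2 hε).ne' fun k => ?_)
  have hnext : breakpoints f b ε a (k + 1) ∈ Ico a b := ⟨(hmem _).1, hlt _⟩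
  rw [breakpoints_succ] at hnext ⊢
  rw [edist_dist]
  exact ENNReal.ofReal_le_ofReal (le_dist_nextBreak (hlt k) hnext.2 (hrc _ hnext))

end Breakpoints

theorem exists_partition_dist_lt {E : Type*} [PseudoMetricSpace E] {f : ℝ → E} {a b ε : ℝ}
    (hab : a ≤ b) (hε : 0 < ε) (hrc : ∀ x ∈ Ico a b, Tendsto f (𝓝[>] x) (𝓝 (f x)))
    (hf : eVariationOn f (Icc a b) ≠ ⊤) :
    ∃ (t : ℕ → ℝ) (K : ℕ), Monotone t ∧ t 0 = a ∧ t K = b ∧ (∀ k < K, t k < t (k + 1)) ∧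
      ∀ k < K, ∀ y ∈ Ico (t k) (t (k + 1)), dist (f y) (f (t k)) < ε := by
  classical
  have hK := exists_breakpoints_eq hab hε hrc hf
  have hlt : ∀ k < Nat.find hK, breakpoints f b ε a k ∈ Ico a b := fun k hk =>
    ⟨(breakpoints_mem_Icc hab hε hrc k).1,
      (breakpoints_mem_Icc hab hε hrc k).2.lt_of_ne (Nat.find_min hK hk)⟩
  refine ⟨breakpoints f b ε a, Nat.find hK, monotone_breakpoints hab hε hrc, rfl,
    Nat.find_spec hK, fun k hk => ?_, fun k _ y hy => ?_⟩
  · rw [breakpoints_succ]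
    exact lt_nextBreak (hlt k hk).2 hε (hrc _ (hlt k hk))
  · rw [breakpoints_succ] at hy
    exact dist_lt_of_mem_Ico_nextBreak hε hy

theorem eVariationOn_indicator_Ico_comp_le {E : Type*} [PseudoEMetricSpace E] [Zero E]
    {f : ℝ → E} (hbot : Tendsto f atBot (𝓝 0)) (htop : Tendsto f atTop (𝓝 0)) {σ : ℝ → ℝ}
    {a b : ℝ} (hσ : MonotoneOn σ (Ico a b)) (hσab : MapsTo σ (Ico a b) (Icc a b)) :
    eVariationOn ((Ico a b).indicator (f ∘ σ)) univ ≤ eVariationOn f univ := by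
  -- Extending `σ` by `-R` and `R` gives monotone `σR R`, and `f ∘ σR R` tends pointwise to the
  -- indicator as `R → ∞`.
  set σR : ℝ → ℝ → ℝ := fun R y => if y < a then -R else if y < b then σ y else R
  have hlim : ∀ y ∈ univ, Tendsto (fun R => f (σR R y)) atTop
      (𝓝 ((Ico a b).indicator (f ∘ σ) y)) := by
    intro y _
    by_cases hya : y < a
    · rw [indicator_of_notMem fun h => hya.not_ge h.1]
      simpa [σR, hya] using hbot
    by_cases hyb : y < b
    · rw [indicator_of_mem (show y ∈ Ico a b from ⟨not_lt.1 hya, hyb⟩)]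
      simpa [σR, hya, hyb] using tendsto_const_nhds
    · rw [indicator_of_notMem fun h => hyb h.2]
      simpa [σR, hya, hyb] using htop
  have hmono : ∀ R, 0 ≤ R → -a ≤ R → b ≤ R → Monotone (σR R) := by
    intro R hR haR hbR y y' hyy'
    simp only [σR]
    split_ifs <;> first
      | linarith
      | exact hσ ⟨by linarith, by assumption⟩ ⟨by linarith, by assumption⟩ hyy'
      | linarith [(hσab ⟨(by linarith : a ≤ y'), (by assumption : y' < b)⟩).1]
      | linarith [(hσab ⟨(by linarith : a ≤ y), (by assumption : y < b)⟩).2]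
  by_contra! hgt
  obtain ⟨R, hvar, hR, haR, hbR⟩ := ((eVariationOn.lowerSemicontinuous_aux hlim hgt).and
    ((eventually_ge_atTop 0).and ((eventually_ge_atTop (-a)).and (eventually_ge_atTop b)))).exists
  exact hvar.not_ge (eVariationOn.comp_le_of_monotoneOn f (σR R)
    ((hmono R hR haR hbR).monotoneOn _) (mapsTo_univ _ _))

section StepApprox

variable {E : Type*} [Zero E]

noncomputable def stepApprox (t : ℕ → ℝ) (K : ℕ) (f : ℝ → E) : ℝ → E :=
  (Ico (t 0) (t K)).indicator fun y => f (sSup (range t ∩ Iic y))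

variable {t : ℕ → ℝ} {K k : ℕ} {f : ℝ → E} {y : ℝ}

theorem sSup_range_inter_Iic_of_mem_Ico (ht : Monotone t) (hy : y ∈ Ico (t k) (t (k + 1))) :
    sSup (range t ∩ Iic y) = t k := by
  refine IsGreatest.csSup_eq ⟨⟨mem_range_self k, hy.1⟩, ?_⟩
  rintro _ ⟨⟨j, rfl⟩, hj⟩
  exact ht (Nat.le_of_lt_succ (ht.reflect_lt (lt_of_le_of_lt hj hy.2)))

theorem stepApprox_eq_of_mem_Ico (ht : Monotone t) (hk : k < K)
    (hy : y ∈ Ico (t k) (t (k + 1))) : stepApprox t K f y = f (t k) := by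
  have hy' : y ∈ Ico (t 0) (t K) := ⟨(ht k.zero_le).trans hy.1, hy.2.trans_le (ht hk)⟩
  rw [stepApprox, indicator_of_mem hy', sSup_range_inter_Iic_of_mem_Ico ht hy]

theorem stepApprox_of_notMem (hy : y ∉ Ico (t 0) (t K)) : stepApprox t K f y = 0 :=
  indicator_of_notMem hy _

theorem exists_lt_mem_Ico_of_mem_Ico (hy : y ∈ Ico (t 0) (t K)) :
    ∃ k < K, y ∈ Ico (t k) (t (k + 1)) := by
  obtain ⟨k, hky, hk, hyk⟩ : ∃ k, t k ≤ y ∧ k < K ∧ y < t (k + 1) := by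
    simpa using Ico_subset_biUnion_Ico K t hy
  exact ⟨k, hk, hky, hyk⟩

theorem eVariationOn_stepApprox_le [PseudoEMetricSpace E] (hbot : Tendsto f atBot (𝓝 0))
    (htop : Tendsto f atTop (𝓝 0)) :
    eVariationOn (stepApprox t K f) univ ≤ eVariationOn f univ := by
  have hne : ∀ y ∈ Ico (t 0) (t K), (range t ∩ Iic y).Nonempty :=
    fun y hy => ⟨t 0, mem_range_self 0, hy.1⟩
  have hbdd : ∀ y, BddAbove (range t ∩ Iic y) := fun y => ⟨y, fun _ h => h.2⟩
  refine eVariationOn_indicator_Ico_comp_le (σ := fun y => sSup (range t ∩ Iic y)) hbot htop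
    (fun y hy y' _ hyy' => ?_) fun y hy => ?_
  · exact csSup_le_csSup (hbdd y') (hne y hy) (inter_subset_inter_right _ (Iic_subset_Iic.2 hyy'))
  · exact ⟨le_csSup (hbdd y) ⟨mem_range_self 0, hy.1⟩,
      (csSup_le (hne y hy) fun _ h => h.2).trans hy.2.le⟩

end StepApprox

theorem integral_norm_sub_le_of_eq_zero_off_Ico {E : Type*} [NormedAddCommGroup E]
    {u w : ℝ → E} (hu : Integrable u) {a b δ : ℝ} (hab : a ≤ b)
    (hin : ∀ y ∈ Ico a b, ‖w y - u y‖ ≤ δ) (hout : ∀ y ∉ Ico a b, w y = 0) :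
    ∫ y, ‖w y - u y‖ ≤ (∫ y in Iio a, ‖u y‖) + δ * (b - a) + ∫ y in Ici b, ‖u y‖ := by
  set g : ℝ → ℝ := (Iio a).indicator (‖u ·‖) + (Ico a b).indicator (fun _ => δ) +
    (Ici b).indicator (‖u ·‖)
  have h₁ : Integrable ((Iio a).indicator (‖u ·‖)) := hu.norm.indicator measurableSet_Iio
  have h₂ : Integrable ((Ico a b).indicator fun _ => δ) :=
    (integrable_indicator_iff measurableSet_Ico).2 (integrableOn_const measure_Ico_lt_top.ne)
  have h₃ : Integrable ((Ici b).indicator (‖u ·‖)) := hu.norm.indicator measurableSet_Ici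
  have hle : ∀ y, ‖w y - u y‖ ≤ g y := by
    intro y
    by_cases hya : y < a
    · simp [g, hya, hout y fun h => hya.not_ge h.1, not_le.2 (hya.trans_le hab), not_le.2 hya]
    by_cases hyb : y < b
    · simpa [g, hya, hyb, not_lt.1 hya] using hin y ⟨not_lt.1 hya, hyb⟩
    · simp [g, hya, hyb, hout y fun h => hyb h.2, not_lt.1 hyb]
  calc ∫ y, ‖w y - u y‖ ≤ ∫ y, g y :=
        integral_mono_of_nonneg (ae_of_all _ fun _ => norm_nonneg _) ((h₁.add h₂).add h₃)
          (ae_of_all _ hle)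
    _ = _ := by
      rw [integral_add' (h₁.add h₂) h₃, integral_add' h₁ h₂, integral_indicator measurableSet_Iio,
        integral_indicator_const _ measurableSet_Ico, integral_indicator measurableSet_Ici,
        Real.volume_real_Ico_of_le hab, smul_eq_mul, mul_comm]

theorem exists_stepApprox_close {E : Type*} [NormedAddCommGroup E] [CompleteSpace E]
    {u : ℝ → E} (hrc : ∀ x, Tendsto u (𝓝[>] x) (𝓝 (u x))) (hBV : eVariationOn u univ ≠ ⊤)
    (hint : Integrable u) {ε : ℝ} (hε : 0 < ε) :
    ∃ (t : ℕ → ℝ) (K : ℕ), Monotone t ∧ (∀ k < K, t k < t (k + 1)) ∧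
      (∀ y, ‖stepApprox t K u y - u y‖ ≤ ε) ∧ ∫ y, ‖stepApprox t K u y - u y‖ ≤ 3 * ε := by
  have hsmall : ∀ l : Filter ℝ, Tendsto u l (𝓝 0) → ∀ᶠ y in l, ‖u y‖ ≤ ε := fun l hl =>
    (tendsto_zero_iff_norm_tendsto_zero.1 hl).eventually (eventually_le_nhds hε)
  have hleft : ∀ᶠ a in atBot, (∀ y ≤ a, ‖u y‖ ≤ ε) ∧ ∫ y in Iio a, ‖u y‖ ≤ ε :=
    (eventually_forall_le_atBot.2
      (hsmall _ (tendsto_atBot_zero_of_eVariationOn_ne_top hBV hint))).and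
      ((tendsto_integral_Iio_zero tendsto_id).eventually (eventually_le_nhds hε))
  have hright : ∀ᶠ b in atTop, (∀ y ≥ b, ‖u y‖ ≤ ε) ∧ ∫ y in Ici b, ‖u y‖ ≤ ε :=
    (eventually_forall_ge_atTop.2
      (hsmall _ (tendsto_atTop_zero_of_eVariationOn_ne_top hBV hint))).and
      ((tendsto_integral_Ici_zero tendsto_id).eventually (eventually_le_nhds hε))
  obtain ⟨a, hua, hIa⟩ := hleft.exists
  obtain ⟨b, hab, hub, hIb⟩ := ((eventually_ge_atTop a).and hright).exists
  set δ := ε / (b - a + 1)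
  have hδ : 0 < δ := div_pos hε (by linarith)
  have hδε : δ ≤ ε := div_le_self hε.le (by linarith)
  have hδab : δ * (b - a) ≤ ε := by
    rw [div_mul_eq_mul_div, div_le_iff₀ (by linarith)]; nlinarith
  obtain ⟨t, K, ht, rfl, rfl, hlt, hdist⟩ := exists_partition_dist_lt hab hδ (fun x _ => hrc x)
    (ne_top_of_le_ne_top hBV (eVariationOn.mono u (subset_univ _)))
  have hin : ∀ y ∈ Ico (t 0) (t K), ‖stepApprox t K u y - u y‖ ≤ δ := fun y hy => by
    obtain ⟨k, hk, hyk⟩ := exists_lt_mem_Ico_of_mem_Ico hy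
    rw [stepApprox_eq_of_mem_Ico ht hk hyk, ← dist_eq_norm, dist_comm]
    exact (hdist k hk y hyk).le
  refine ⟨t, K, ht, hlt, fun y => ?_, ?_⟩
  · by_cases hy : y ∈ Ico (t 0) (t K)
    · exact (hin y hy).trans hδε
    rw [stepApprox_of_notMem hy, zero_sub, norm_neg]
    rcases not_and_or.1 hy with hy | hy
    · exact hua y (not_le.1 hy).le
    · exact hub y (not_lt.1 hy)
  · calc ∫ y, ‖stepApprox t K u y - u y‖
        ≤ (∫ y in Iio (t 0), ‖u y‖) + δ * (t K - t 0) + ∫ y in Ici (t K), ‖u y‖ :=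
          integral_norm_sub_le_of_eq_zero_off_Ico hint hab hin fun _ hy => stepApprox_of_notMem hy
      _ ≤ 3 * ε := by linarith

theorem stmt_9_general {n : ℕ} (u uL : ℝ → Fin n → ℝ)
    (hrc : ∀ x : ℝ, Tendsto u (nhdsWithin x (Set.Ioi x)) (nhds (u x)))
    (hBV : eVariationOn u Set.univ ≠ ⊤)
    (hint : Integrable u) :
    ∃ v : ℕ → ℝ → Fin n → ℝ,
      (∀ ν, ∃ (N : ℕ) (pts : Fin (N + 1) → ℝ), StrictMono pts ∧
        (∀ y : ℝ, y < pts 0 → v ν y = 0) ∧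
        (∀ y : ℝ, pts (Fin.last N) ≤ y → v ν y = 0) ∧
        (∀ i : Fin N, ∀ y ∈ Set.Ico (pts i.castSucc) (pts i.succ),
          v ν y = v ν (pts i.castSucc)) ∧
        (∀ y : ℝ, v ν y = 0 ∨ ∃ p : ℝ, v ν y = u p ∨ v ν y = uL p)) ∧
      Tendsto (fun ν => ∫ y : ℝ, ‖v ν y - u y‖) atTop (nhds 0) ∧
      TendstoUniformly v u atTop ∧
      ∀ ν, eVariationOn (v ν) Set.univ ≤ eVariationOn u Set.univ := by
  choose t K ht hlt hunif hL1 using fun ν : ℕ =>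
    exists_stepApprox_close hrc hBV hint (Nat.one_div_pos_of_nat (α := ℝ) (n := ν))
  have hε : Tendsto (fun ν : ℕ => 1 / ((ν : ℝ) + 1)) atTop (𝓝 0) :=
    tendsto_one_div_add_atTop_nhds_zero_nat
  refine ⟨fun ν => stepApprox (t ν) (K ν) u, fun ν => ⟨K ν, fun i => t ν i,
    Fin.strictMono_iff_lt_succ.2 fun i => hlt ν i i.isLt,
    fun y hy => stepApprox_of_notMem fun h => hy.not_ge h.1,
    fun y hy => stepApprox_of_notMem fun h => hy.not_gt h.2, fun i y hy => ?_,
    fun y => (indicator_eq_zero_or_self _ _ _).imp_right fun h => ⟨_, Or.inl h⟩⟩, ?_, ?_,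
    fun ν => eVariationOn_stepApprox_le (tendsto_atBot_zero_of_eVariationOn_ne_top hBV hint)
      (tendsto_atTop_zero_of_eVariationOn_ne_top hBV hint)⟩
  · simp only [Fin.val_castSucc, Fin.val_succ] at hy ⊢
    rw [stepApprox_eq_of_mem_Ico (ht ν) i.isLt hy,
      stepApprox_eq_of_mem_Ico (ht ν) i.isLt ⟨le_rfl, hlt ν i i.isLt⟩]
  · exact squeeze_zero (fun ν => integral_nonneg fun _ => norm_nonneg _) hL1
      (by simpa using hε.const_mul 3)
  · refine Metric.tendstoUniformly_iff.2 fun ε hε' => ?_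
    filter_upwards [hε.eventually (eventually_lt_nhds hε')] with ν hν y
    rw [dist_comm, dist_eq_norm]
    exact (hunif ν y).trans_lt hν

theorem stmt_9 {n : ℕ} (u uL : ℝ → Fin n → ℝ)
    (hrc : ∀ x : ℝ, Tendsto u (nhdsWithin x (Set.Ioi x)) (nhds (u x)))
    (hlc : ∀ x : ℝ, Tendsto u (nhdsWithin x (Set.Iio x)) (nhds (uL x)))
    (hBV : eVariationOn u Set.univ ≠ ⊤)
    (hint : Integrable u) :
    ∃ v : ℕ → ℝ → Fin n → ℝ,
      (∀ ν, ∃ (N : ℕ) (pts : Fin (N + 1) → ℝ), StrictMono pts ∧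
        (∀ y : ℝ, y < pts 0 → v ν y = 0) ∧
        (∀ y : ℝ, pts (Fin.last N) ≤ y → v ν y = 0) ∧
        (∀ i : Fin N, ∀ y ∈ Set.Ico (pts i.castSucc) (pts i.succ),
          v ν y = v ν (pts i.castSucc)) ∧
        (∀ y : ℝ, v ν y = 0 ∨ ∃ p : ℝ, v ν y = u p ∨ v ν y = uL p)) ∧
      Tendsto (fun ν => ∫ y : ℝ, ‖v ν y - u y‖) atTop (nhds 0) ∧
      TendstoUniformly v u atTop ∧
      ∀ ν, eVariationOn (v ν) Set.univ ≤ eVariationOn u Set.univ :=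
  stmt_9_general u uL hrc hBV hint
end

section
/- Let D* be a set of piecewise constant functions in L¹(ℝ;Ω), F : D* → [0,∞), and suppose: (a) F is invariant under relocating jump points that preserves the ordered sequence of attained values; (b) F does not increase when one value in the ordered sequence of attained values is removed; (c) for fixed jump points x_1 < ... < x_{N+1}, the map (u_1,...,u_N) ↦ F(Σ_α u_α χ_{[x_α, x_{α+1})}) is continuous. Then F is lower semicontinuous on D* with respect to the L¹ norm: if u_ν ∈ D* converge in L¹ to u ∈ D*, then F(u) ≤ liminf_ν F(u_ν). -/
/-!
Write `u = pcf P V`. By L¹ convergence one can pick, in each interval `[P i, P (i+1))`, a point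
`y i` (depending on `ν`) where `‖uν ν - u‖` is at most its mean over the interval; then the values
`uν ν (y i)` converge to `V i`, so by (c) `F (pcf P (uν ν ∘ y)) → F u`. On the other hand
`uν ν ∘ y` is a subsequence of the ordered values of `uν ν` on a common refinement of its jump
points and the `y i`, so (a) and repeated use of (b) give `F (pcf P (uν ν ∘ y)) ≤ F (uν ν)`.
-/

open Filter Set MeasureTheory

/-- The piecewise constant function with jump points `pts` and values `vals`
(and value `0` outside `[pts 0, pts N)`). -/
noncomputable def pcf {n N : ℕ} (pts : Fin (N + 1) → ℝ) (vals : Fin N → Fin n → ℝ) :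
    ℝ → Fin n → ℝ := fun y =>
  ∑ i : Fin N, Set.indicator (Set.Ico (pts i.castSucc) (pts i.succ)) (fun _ => vals i) y

/-- The set of piecewise constant functions. -/
def pcSet (n : ℕ) : Set (ℝ → Fin n → ℝ) :=
  {f | ∃ (N : ℕ) (pts : Fin (N + 1) → ℝ) (vals : Fin N → Fin n → ℝ),
    StrictMono pts ∧ f = pcf pts vals}

open Topology

section

variable {α : Type*}

lemma Fin.exists_mem_Ico_of_mem_Ico [LinearOrder α] {K : ℕ} {T : Fin (K + 1) → α}
    (hT : Monotone T) {x : α} (hx : x ∈ Ico (T 0) (T (Fin.last K))) :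
    ∃ j : Fin K, x ∈ Ico (T j.castSucc) (T j.succ) := by
  induction K with
  | zero => exact absurd hx.2 (not_lt.2 hx.1)
  | succ K ih =>
    by_cases h : x < T (Fin.last K).castSucc
    · obtain ⟨j, hj⟩ := ih (T := T ∘ Fin.castSucc) (hT.comp Fin.strictMono_castSucc.monotone)
        ⟨hx.1, h⟩
      exact ⟨j.castSucc, by simpa only [Function.comp_apply, Fin.succ_castSucc] using hj⟩
    · exact ⟨Fin.last K, not_lt.1 h, by simpa using hx.2⟩

lemma StrictMono.le_iff_le_of_mem_Ico [Preorder α] {K : ℕ} {T : Fin (K + 1) → α}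
    (hT : StrictMono T) {j : Fin K} {x : α} (hx : x ∈ Ico (T j.castSucc) (T j.succ))
    (m : Fin (K + 1)) : T m ≤ x ↔ T m ≤ T j.castSucc :=
  ⟨fun h => hT.monotone (Fin.le_castSucc_iff.2 (hT.lt_iff_lt.1 (h.trans_lt hx.2))),
    fun h => h.trans hx.1⟩

lemma strictMono_of_mem_Ico [Preorder α] {N : ℕ} {P : Fin (N + 1) → α} (hP : Monotone P)
    {y : Fin N → α} (hy : ∀ i, y i ∈ Ico (P i.castSucc) (P i.succ)) : StrictMono y :=
  fun a b hab => (hy a).2.trans_le ((hP (Fin.succ_le_castSucc_iff.2 hab)).trans (hy b).1)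

lemma exists_strictMono_refinement [LinearOrder α] [Nonempty α] [NoMaxOrder α]
    (s t : Finset α) : ∃ (K : ℕ) (T : Fin (K + 1) → α), StrictMono T ∧ ↑s ⊆ range T ∧
      ∀ x ∈ t, ∃ j : Fin K, T j.castSucc = x := by
  obtain ⟨b, hb⟩ := t.exists_le
  obtain ⟨c, hbc⟩ := exists_gt b
  set u := insert c (s ∪ t)
  obtain ⟨K, hK⟩ : ∃ K, u.card = K + 1 := Nat.exists_eq_succ_of_ne_zero (by simp [u])
  set T := u.orderEmbOfFin hK
  have hrange : range T = u := u.range_orderEmbOfFin hK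
  refine ⟨K, T, T.strictMono, fun x hx => by simp [hrange, u, hx], fun x hx => ?_⟩
  obtain ⟨m, rfl⟩ : x ∈ range T := by simp [hrange, u, hx]
  obtain ⟨m', hm'⟩ : c ∈ range T := by simp [hrange, u]
  obtain ⟨j, rfl⟩ := Fin.exists_castSucc_eq.2 fun hm : m = Fin.last K => by
    have : T m < T m' := hm' ▸ (hb _ hx).trans_lt hbc
    exact (T.lt_iff_lt.1 this).not_ge (hm ▸ Fin.le_last m')
  exact ⟨j, rfl⟩

lemma le_comp_of_strictMono {β : Type*} [Preorder β] (G : ∀ N, (Fin N → α) → β)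
    (hG : ∀ N (v : Fin (N + 1) → α) (j : Fin (N + 1)), G N (v ∘ j.succAbove) ≤ G (N + 1) v)
    {M N : ℕ} (φ : Fin M → Fin N) (hφ : StrictMono φ) (v : Fin N → α) :
    G M (v ∘ φ) ≤ G N v := by
  induction N generalizing M with
  | zero =>
    cases M with
    | zero => exact le_of_eq (congrArg _ (Subsingleton.elim _ _))
    | succ => exact (φ 0).elim0
  | succ N ih =>
    by_cases hsurj : Function.Surjective φ
    · obtain rfl : M = N + 1 := le_antisymm (Fin.le_of_injective φ hφ.injective)
        (by simpa using Fintype.card_le_of_surjective φ hsurj)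
      rw [hφ.eq_id]
      rfl
    · obtain ⟨j, hj⟩ := not_forall.1 hsurj
      choose ψ hψ using fun a => Fin.exists_succAbove_eq fun h : φ a = j => hj ⟨a, h⟩
      have hψmono : StrictMono ψ := fun a b hab =>
        (Fin.strictMono_succAbove j).lt_iff_lt.1 (by simpa only [hψ] using hφ hab)
      have hcomp : v ∘ φ = (v ∘ j.succAbove) ∘ ψ := funext fun a => by simp [hψ]
      rw [hcomp]
      exact (ih ψ hψmono _).trans (hG N v j)

end

variable {n : ℕ}

lemma pcf_apply_of_mem_Ico {N : ℕ} {pts : Fin (N + 1) → ℝ} (hpts : Monotone pts)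
    (vals : Fin N → Fin n → ℝ) {i : Fin N} {y : ℝ}
    (hy : y ∈ Ico (pts i.castSucc) (pts i.succ)) : pcf pts vals y = vals i := by
  refine (Finset.sum_eq_single i (fun j _ hji => indicator_of_notMem (fun hyj => ?_) _)
    (by simp)).trans (indicator_of_mem hy _)
  rcases hji.lt_or_gt with h | h
  · exact (hyj.2.trans_le (hpts (Fin.succ_le_castSucc_iff.2 h))).not_ge hy.1
  · exact (hy.2.trans_le (hpts (Fin.succ_le_castSucc_iff.2 h))).not_ge hyj.1

lemma pcf_apply_of_notMem {N : ℕ} {pts : Fin (N + 1) → ℝ} (hpts : Monotone pts)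
    (vals : Fin N → Fin n → ℝ) {y : ℝ} (hy : y ∉ Ico (pts 0) (pts (Fin.last N))) :
    pcf pts vals y = 0 :=
  Finset.sum_eq_zero fun _ _ => indicator_of_notMem (fun hi => hy
    ⟨(hpts (Fin.zero_le _)).trans hi.1, hi.2.trans_le (hpts (Fin.le_last _))⟩) _

lemma pcf_apply_eq_of_forall_le_iff {N : ℕ} (pts : Fin (N + 1) → ℝ) (vals : Fin N → Fin n → ℝ)
    {x x' : ℝ} (h : ∀ i, pts i ≤ x ↔ pts i ≤ x') : pcf pts vals x = pcf pts vals x' := by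
  simp only [pcf, indicator_apply, mem_Ico, ← not_le, h]

lemma pcf_eq_pcf_of_range_subset {N K : ℕ} {Q : Fin (N + 1) → ℝ} {T : Fin (K + 1) → ℝ}
    (hQ : Monotone Q) (hT : StrictMono T) (hQT : range Q ⊆ range T)
    (vals : Fin N → Fin n → ℝ) :
    pcf Q vals = pcf T (fun j => pcf Q vals (T j.castSucc)) := by
  funext y
  by_cases hy : y ∈ Ico (T 0) (T (Fin.last K))
  · obtain ⟨j, hj⟩ := Fin.exists_mem_Ico_of_mem_Ico hT.monotone hy
    rw [pcf_apply_of_mem_Ico hT.monotone _ hj]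
    refine pcf_apply_eq_of_forall_le_iff Q vals fun i => ?_
    obtain ⟨m, hm⟩ := hQT (mem_range_self i)
    rw [← hm]
    exact hT.le_iff_le_of_mem_Ico hj m
  · rw [pcf_apply_of_notMem hT.monotone _ hy, pcf_apply_of_notMem hQ]
    obtain ⟨m₀, hm₀⟩ := hQT (mem_range_self 0)
    obtain ⟨m₁, hm₁⟩ := hQT (mem_range_self (Fin.last N))
    refine fun hy' => hy (Ico_subset_Ico ?_ ?_ hy')
    · exact hm₀ ▸ hT.monotone (Fin.zero_le m₀)
    · exact hm₁ ▸ hT.monotone (Fin.le_last m₁)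

lemma integrable_of_mem_pcSet {u : ℝ → Fin n → ℝ} (hu : u ∈ pcSet n) : Integrable u := by
  obtain ⟨N, pts, vals, -, rfl⟩ := hu
  refine integrable_finsetSum _ fun i _ => (integrable_indicator_iff measurableSet_Ico).2 ?_
  exact integrableOn_const (by simp)

def NonincreasingUnderSubseq (F : (ℝ → Fin n → ℝ) → ENNReal) : Prop :=
  ∀ (M N : ℕ) (φ : Fin M → Fin N), StrictMono φ →
    ∀ (pts : Fin (N + 1) → ℝ) (pts' : Fin (M + 1) → ℝ) (vals : Fin N → Fin n → ℝ),
      StrictMono pts → StrictMono pts' → F (pcf pts' (vals ∘ φ)) ≤ F (pcf pts vals)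

lemma nonincreasingUnderSubseq_of_relocation_of_removal {F : (ℝ → Fin n → ℝ) → ENNReal}
    (hreloc : ∀ (N : ℕ) (pts pts' : Fin (N + 1) → ℝ) (vals : Fin N → Fin n → ℝ),
      StrictMono pts → StrictMono pts' → F (pcf pts vals) = F (pcf pts' vals))
    (hremove : ∀ (N : ℕ) (pts : Fin (N + 2) → ℝ) (pts' : Fin (N + 1) → ℝ)
      (vals : Fin (N + 1) → Fin n → ℝ) (j : Fin (N + 1)),
      StrictMono pts → StrictMono pts' →
      F (pcf pts' (vals ∘ j.succAbove)) ≤ F (pcf pts vals)) :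
    NonincreasingUnderSubseq F := by
  intro M N φ hφ pts pts' vals hpts hpts'
  have hnat : ∀ K, StrictMono fun i : Fin (K + 1) => ((i : ℕ) : ℝ) :=
    fun K => Nat.strictMono_cast.comp Fin.val_strictMono
  rw [hreloc _ pts' _ _ hpts' (hnat M), hreloc _ pts _ _ hpts (hnat N)]
  exact le_comp_of_strictMono (fun K v => F (pcf (fun i : Fin (K + 1) => ((i : ℕ) : ℝ)) v))
    (fun K v j => hremove K _ _ v j (hnat _) (hnat _)) φ hφ vals

/-- On a common refinement of the jump points of `w` and the sample points `y`, the samples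
`w ∘ y` form a subsequence of the values of `w`. -/
lemma NonincreasingUnderSubseq.pcf_comp_le {F : (ℝ → Fin n → ℝ) → ENNReal}
    (hF : NonincreasingUnderSubseq F) {w : ℝ → Fin n → ℝ} (hw : w ∈ pcSet n) {N : ℕ}
    {P : Fin (N + 1) → ℝ} (hP : StrictMono P) {y : Fin N → ℝ} (hy : StrictMono y) :
    F (pcf P (w ∘ y)) ≤ F w := by
  obtain ⟨M, Q, W, hQ, rfl⟩ := hw
  obtain ⟨K, T, hT, hQT, hyT⟩ :=
    exists_strictMono_refinement (Finset.univ.image Q) (Finset.univ.image y)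
  choose φ hφ using fun i => hyT (y i) (by simp)
  have hφmono : StrictMono φ := fun a b hab =>
    Fin.castSucc_lt_castSucc_iff.1 (hT.lt_iff_lt.1 (by rw [hφ, hφ]; exact hy hab))
  have hcomp : pcf Q W ∘ y = (fun j => pcf Q W (T j.castSucc)) ∘ φ :=
    funext fun i => by simp [hφ]
  rw [hcomp]
  conv_rhs => rw [pcf_eq_pcf_of_range_subset hQ.monotone hT (by simpa using hQT) W]
  exact hF _ _ φ hφmono T P _ hT hP

lemma exists_mem_Ico_le_integral_div {g : ℝ → ℝ} (hg : Integrable g) (hg0 : 0 ≤ g) {a b : ℝ}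
    (hab : a < b) : ∃ y ∈ Ico a b, g y ≤ (∫ z, g z) / (b - a) := by
  obtain ⟨y, hy, hle⟩ := exists_le_setAverage (μ := volume) (s := Ico a b) (by simp [hab])
    (by simp) hg.integrableOn
  refine ⟨y, hy, hle.trans ?_⟩
  rw [setAverage_eq, Real.volume_real_Ico_of_le hab.le, smul_eq_mul, inv_mul_eq_div]
  exact div_le_div_of_nonneg_right (setIntegral_le_integral hg (Eventually.of_forall hg0))
    (sub_pos.2 hab).le

lemma exists_tendsto_comp_of_tendsto_integral_norm_sub {N : ℕ} {P : Fin (N + 1) → ℝ}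
    (hP : StrictMono P) (V : Fin N → Fin n → ℝ) {u : ℕ → ℝ → Fin n → ℝ}
    (hu : ∀ k, Integrable (u k))
    (hconv : Tendsto (fun k => ∫ y, ‖u k y - pcf P V y‖) atTop (𝓝 0)) :
    ∃ y : ℕ → Fin N → ℝ, (∀ k i, y k i ∈ Ico (P i.castSucc) (P i.succ)) ∧
      Tendsto (fun k => u k ∘ y k) atTop (𝓝 V) := by
  -- sample where the error is at most its mean over the interval, hence at most its L¹ norm
  -- divided by the length of the interval
  choose y hy hle using fun k (i : Fin N) => exists_mem_Ico_le_integral_div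
    ((hu k).sub (integrable_of_mem_pcSet ⟨N, P, V, hP, rfl⟩)).norm (fun _ => norm_nonneg _)
    (hP i.castSucc_lt_succ)
  refine ⟨y, hy, tendsto_pi_nhds.2 fun i => tendsto_iff_norm_sub_tendsto_zero.2 ?_⟩
  refine squeeze_zero (fun _ => norm_nonneg _) (fun k => ?_)
    (by simpa using hconv.div_const (P i.succ - P i.castSucc))
  simpa only [Function.comp_apply, Pi.sub_apply, pcf_apply_of_mem_Ico hP.monotone V (hy k i)]
    using hle k i

theorem stmt_10 {n : ℕ} (F : (ℝ → Fin n → ℝ) → ENNReal)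
    -- (a) invariance under relocation of the jump points
    (hreloc : ∀ (N : ℕ) (pts pts' : Fin (N + 1) → ℝ) (vals : Fin N → Fin n → ℝ),
      StrictMono pts → StrictMono pts' → F (pcf pts vals) = F (pcf pts' vals))
    -- (b) removing one value from the ordered sequence of attained values decreases F
    (hremove : ∀ (N : ℕ) (pts : Fin (N + 2) → ℝ) (pts' : Fin (N + 1) → ℝ)
      (vals : Fin (N + 1) → Fin n → ℝ) (j : Fin (N + 1)),
      StrictMono pts → StrictMono pts' →
      F (pcf pts' (vals ∘ j.succAbove)) ≤ F (pcf pts vals))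
    -- (c) continuity in the values, for fixed jump points
    (hcontval : ∀ (N : ℕ) (pts : Fin (N + 1) → ℝ), StrictMono pts →
      Continuous fun vals : Fin N → Fin n → ℝ => F (pcf pts vals)) :
    ∀ u ∈ pcSet n, ∀ uν : ℕ → ℝ → Fin n → ℝ, (∀ ν, uν ν ∈ pcSet n) →
      Tendsto (fun ν => ∫ y : ℝ, ‖uν ν y - u y‖) atTop (nhds 0) →
      F u ≤ liminf (fun ν => F (uν ν)) atTop := by
  rintro u ⟨N, P, V, hP, rfl⟩ uν huν hconv
  obtain ⟨y, hy, hvals⟩ := exists_tendsto_comp_of_tendsto_integral_norm_sub hP V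
    (fun k => integrable_of_mem_pcSet (huν k)) hconv
  have hsample : ∀ k, F (pcf P (uν k ∘ y k)) ≤ F (uν k) := fun k =>
    (nonincreasingUnderSubseq_of_relocation_of_removal hreloc hremove).pcf_comp_le (huν k) hP
      (strictMono_of_mem_Ico hP.monotone (hy k))
  calc F (pcf P V) = liminf (fun k => F (pcf P (uν k ∘ y k))) atTop :=
        (((hcontval N P hP).tendsto V).comp hvals).liminf_eq.symm
    _ ≤ liminf (fun k => F (uν k)) atTop := liminf_le_liminf (Eventually.of_forall hsample)
end
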